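/- Let (Ω, F, P) be a probability space, let Y₁, Y₀ be integrable random variables, D a {0,1}-valued random variable, and X a random element such that (Y₁, Y₀) is conditionally independent of D given X. Suppose p(X) := P(D = 1 | X) satisfies 0 < p(X) < 1 almost surely, and that D·Y₁/p(X) and (1−D)·Y₀/(1−p(X)) are integrable. Then E[ D·Y₁/p(X) − (1−D)·Y₀/(1−p(X)) ] = E[Y₁ − Y₀]. -/

import Mathlib

/-!
Conditional independence of `(Y₁, Y₀)` and `D` given `X` means that learning the potential
outcomes does not change the propensity: `E[D | X, Y₁, Y₀] = p(X)`. As `Y₁ / p(X)` is measurable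
for `σ(X, Y₁, Y₀)`, the tower property and pulling out this known factor give
`E[D Y₁ / p(X)] = E[p(X) Y₁ / p(X)] = E[Y₁]`; the control arm is the same with `1 - D` and
`1 - p(X)`. The identity `E[D | X, Y₁, Y₀] = p(X)` is checked on the π-system of sets `s ∩ u`
with `s ∈ σ(X)`, `u ∈ σ(Y₁, Y₀)`, where it is the product rule defining conditional independence.
-/

open MeasureTheory ProbabilityTheory Set

theorem Set.indicator_preimage_one_eq_self {α M : Type*} [Zero M] [One M] {f : α → M}
    (hf : ∀ a, f a = 0 ∨ f a = 1) : (f ⁻¹' {1}).indicator (fun _ ↦ 1) = f := by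
  ext a
  rcases hf a with h | h <;> by_cases h' : a ∈ f ⁻¹' {1} <;> simp_all

theorem IsPiSystem.image2_inter {α : Type*} {C D : Set (Set α)} (hC : IsPiSystem C)
    (hD : IsPiSystem D) : IsPiSystem (image2 (· ∩ ·) C D) := by
  rintro _ ⟨s₁, hs₁, t₁, ht₁, rfl⟩ _ ⟨s₂, hs₂, t₂, ht₂, rfl⟩ hst
  rw [inter_inter_inter_comm] at hst ⊢
  exact mem_image2_of_mem (hC _ hs₁ _ hs₂ (hst.mono inter_subset_left))
    (hD _ ht₁ _ ht₂ (hst.mono inter_subset_right))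

theorem MeasurableSpace.generateFrom_image2_inter {α : Type*} (m₁ m₂ : MeasurableSpace α) :
    generateFrom (image2 (· ∩ ·) {s | MeasurableSet[m₁] s} {t | MeasurableSet[m₂] t}) =
      m₁ ⊔ m₂ := by
  refine le_antisymm (generateFrom_le ?_) (sup_le (fun s hs ↦ ?_) (fun t ht ↦ ?_))
  · rintro _ ⟨s, hs, t, ht, rfl⟩
    exact (le_sup_left (b := m₂) s hs).inter (le_sup_right (a := m₁) t ht)
  · exact measurableSet_generateFrom ⟨s, hs, univ, .univ, inter_univ s⟩
  · exact measurableSet_generateFrom ⟨univ, .univ, t, ht, univ_inter t⟩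

namespace MeasureTheory

variable {Ω : Type*} {m m₁ m₂ mΩ : MeasurableSpace Ω} {μ : Measure Ω}

theorem setIntegral_eq_of_forall_setIntegral_inter_eq {E : Type*} [NormedAddCommGroup E]
    [NormedSpace ℝ E] {f g : Ω → E} (hm : m₁ ⊔ m₂ ≤ mΩ) (hf : Integrable f μ)
    (hg : Integrable g μ)
    (h : ∀ s t, MeasurableSet[m₁] s → MeasurableSet[m₂] t →
      ∫ x in s ∩ t, f x ∂μ = ∫ x in s ∩ t, g x ∂μ)
    {t : Set Ω} (ht : MeasurableSet[m₁ ⊔ m₂] t) : ∫ x in t, f x ∂μ = ∫ x in t, g x ∂μ := by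
  induction t, ht using MeasurableSpace.induction_on_inter
    (MeasurableSpace.generateFrom_image2_inter m₁ m₂).symm
    ((@MeasurableSpace.isPiSystem_measurableSet Ω m₁).image2_inter
      (@MeasurableSpace.isPiSystem_measurableSet Ω m₂)) with
  | empty => simp
  | basic t ht =>
    obtain ⟨s, hs, u, hu, rfl⟩ := ht
    exact h s u hs hu
  | compl t ht ih =>
    have huniv := h univ univ .univ .univ
    rw [inter_univ, Measure.restrict_univ] at huniv
    rw [setIntegral_compl (hm t ht) hf, setIntegral_compl (hm t ht) hg, huniv, ih]
  | iUnion t hdisj ht ih =>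
    rw [integral_iUnion (fun i ↦ hm _ (ht i)) hdisj hf.integrableOn,
      integral_iUnion (fun i ↦ hm _ (ht i)) hdisj hg.integrableOn]
    exact tsum_congr ih

theorem condExp_const_sub [IsFiniteMeasure μ] (hm : m ≤ mΩ) (c : ℝ) {f : Ω → ℝ}
    (hf : Integrable f μ) : μ[fun ω ↦ c - f ω | m] =ᵐ[μ] fun ω ↦ c - μ[f | m] ω := by
  filter_upwards [condExp_sub (integrable_const c) hf m] with ω hω
  rw [← Pi.sub_def, hω, Pi.sub_apply, condExp_const hm]

theorem integral_mul_div_eq_integral_of_condExp_eq (hm : m ≤ mΩ) [SigmaFinite (μ.trim hm)]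
    {Z Y q : Ω → ℝ} (hY : AEStronglyMeasurable[m] Y μ) (hq : StronglyMeasurable[m] q)
    (hZ : Integrable Z μ) (hZYq : Integrable (fun ω ↦ Z ω * Y ω / q ω) μ)
    (hZq : μ[Z | m] =ᵐ[μ] q) (hq₀ : ∀ᵐ ω ∂μ, q ω ≠ 0) :
    ∫ ω, Z ω * Y ω / q ω ∂μ = ∫ ω, Y ω ∂μ := by
  have hYqZ : (fun ω ↦ Z ω * Y ω / q ω) = (Y / q) * Z := by
    ext ω
    simp only [Pi.mul_apply, Pi.div_apply]
    ring
  rw [hYqZ] at hZYq ⊢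
  rw [← integral_condExp hm]
  refine integral_congr_ae ?_
  filter_upwards [condExp_mul_of_aestronglyMeasurable_left (hY.div₀ hq.aestronglyMeasurable)
    hZYq hZ, hZq, hq₀] with ω hpull hZqω hqω
  rw [hpull, Pi.mul_apply, hZqω, Pi.div_apply, div_mul_cancel₀ _ hqω]

end MeasureTheory

namespace ProbabilityTheory

variable {Ω : Type*} {m m₁ m₂ mΩ : MeasurableSpace Ω} [StandardBorelSpace Ω] {μ : Measure Ω}

theorem CondIndepFun.congr [IsFiniteMeasure μ] {β γ : Type*} {mβ : MeasurableSpace β}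
    {mγ : MeasurableSpace γ} {hm : m ≤ mΩ} {f f' : Ω → β} {g g' : Ω → γ}
    (h : CondIndepFun m hm f g μ) (hf : f =ᵐ[μ] f') (hg : g =ᵐ[μ] g') :
    CondIndepFun m hm f' g' μ := by
  rw [← condExpKernel_comp_trim (μ := μ) hm] at hf hg
  exact Kernel.IndepFun.congr' h (Measure.ae_ae_of_ae_comp hf) (Measure.ae_ae_of_ae_comp hg)

theorem CondIndep.condExp_indicator_sup_eq [IsFiniteMeasure μ]
    (hm : m ≤ mΩ) (hm₁ : m₁ ≤ mΩ) (hm₂ : m₂ ≤ mΩ) (h : CondIndep m m₁ m₂ hm μ)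
    {t : Set Ω} (ht : MeasurableSet[m₂] t) : μ⟦t | m ⊔ m₁⟧ =ᵐ[μ] μ⟦t | m⟧ := by
  have hprod := (condIndep_iff m m₁ m₂ hm hm₁ hm₂ μ).1 h
  have hint : Integrable (t.indicator fun _ ↦ (1 : ℝ)) μ :=
    (integrable_const 1).indicator (hm₂ t ht)
  refine (ae_eq_condExp_of_forall_setIntegral_eq (sup_le hm hm₁) hint
    (fun s _ _ ↦ integrable_condExp.integrableOn) (fun s hs _ ↦ ?_)
    ((stronglyMeasurable_condExp (m := m)).mono (le_sup_left (b := m₁))).aestronglyMeasurable).symm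
  refine setIntegral_eq_of_forall_setIntegral_inter_eq (sup_le hm hm₁) integrable_condExp hint
    (fun s u hs hu ↦ ?_) hs
  have hu' := hm₁ u hu
  have hint_u : Integrable (u.indicator fun _ ↦ (1 : ℝ)) μ := (integrable_const 1).indicator hu'
  have hmul : u.indicator (μ⟦t | m⟧) = μ⟦t | m⟧ * u.indicator fun _ ↦ (1 : ℝ) := by
    ext x
    by_cases hx : x ∈ u <;> simp [hx]
  have hint_mul : Integrable (μ⟦t | m⟧ * u.indicator fun _ ↦ (1 : ℝ)) μ :=
    hmul ▸ integrable_condExp.indicator hu'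
  calc ∫ x in s ∩ u, (μ⟦t | m⟧) x ∂μ
      = ∫ x in s, (μ⟦t | m⟧ * u.indicator fun _ ↦ (1 : ℝ)) x ∂μ := by
        rw [← hmul, setIntegral_indicator hu']
    _ = ∫ x in s, (μ⟦t | m⟧ * μ⟦u | m⟧) x ∂μ := by
        rw [← setIntegral_condExp hm hint_mul hs]
        refine setIntegral_congr_ae (hm s hs) ?_
        filter_upwards [condExp_mul_of_stronglyMeasurable_left stronglyMeasurable_condExp
          hint_mul hint_u] with x hx _ using hx
    _ = ∫ x in s, (μ⟦u ∩ t | m⟧) x ∂μ := by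
        refine setIntegral_congr_ae (hm s hs) ?_
        filter_upwards [hprod u t hu ht] with x hx _
        rw [hx, Pi.mul_apply, Pi.mul_apply, mul_comm]
    _ = ∫ x in s ∩ u, t.indicator (fun _ ↦ (1 : ℝ)) x ∂μ := by
        rw [setIntegral_condExp hm _ hs, ← setIntegral_indicator hu', indicator_indicator]
        exact (integrable_const 1).indicator (hu'.inter (hm₂ t ht))

theorem CondIndepFun.condExp_sup_comap_eq [IsFiniteMeasure μ] {β : Type*} [MeasurableSpace β]
    (hm : m ≤ mΩ) {W : Ω → β} {D : Ω → ℝ} (hW : Measurable W) (hD : Measurable D)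
    (hD₀₁ : ∀ ω, D ω = 0 ∨ D ω = 1) (h : CondIndepFun m hm W D μ) :
    μ[D | m ⊔ MeasurableSpace.comap W inferInstance] =ᵐ[μ] μ[D | m] := by
  rw [← indicator_preimage_one_eq_self hD₀₁]
  exact ((condIndepFun_iff_condIndep _ _ _ _ _).1 h).condExp_indicator_sup_eq hm hW.comap_le
    hD.comap_le ⟨{1}, measurableSet_singleton 1, rfl⟩

theorem integral_ipw_eq_integral_sub [IsProbabilityMeasure μ]
    (hm : m ≤ mΩ) {Y₁ Y₀ D p : Ω → ℝ} (hY₁ : Integrable Y₁ μ) (hY₀ : Integrable Y₀ μ)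
    (hD : Measurable D) (hD₀₁ : ∀ ω, D ω = 0 ∨ D ω = 1)
    (hindep : CondIndepFun m hm (fun ω ↦ (Y₁ ω, Y₀ ω)) D μ) (hp : p = μ[D | m])
    (hp₀₁ : ∀ᵐ ω ∂μ, 0 < p ω ∧ p ω < 1)
    (hint₁ : Integrable (fun ω ↦ D ω * Y₁ ω / p ω) μ)
    (hint₀ : Integrable (fun ω ↦ (1 - D ω) * Y₀ ω / (1 - p ω)) μ) :
    ∫ ω, (D ω * Y₁ ω / p ω - (1 - D ω) * Y₀ ω / (1 - p ω)) ∂μ = ∫ ω, (Y₁ ω - Y₀ ω) ∂μ := by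
  -- `σ(Y₁, Y₀)` need not be a sub-σ-algebra, so condition on a measurable version `W` instead.
  obtain ⟨W, hW, hYW⟩ : ∃ W : Ω → ℝ × ℝ, Measurable W ∧ (fun ω ↦ (Y₁ ω, Y₀ ω)) =ᵐ[μ] W :=
    have hY := (hY₁.aestronglyMeasurable.prodMk hY₀.aestronglyMeasurable).aemeasurable
    ⟨hY.mk, hY.measurable_mk, hY.ae_eq_mk⟩
  have hle : m ⊔ MeasurableSpace.comap W inferInstance ≤ mΩ := sup_le hm hW.comap_le
  have hW_sup : Measurable[m ⊔ MeasurableSpace.comap W inferInstance] W :=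
    (comap_measurable W).mono le_sup_right le_rfl
  have hp_sup_meas : StronglyMeasurable[m ⊔ MeasurableSpace.comap W inferInstance] p :=
    hp ▸ stronglyMeasurable_condExp.mono le_sup_left
  have hD_int : Integrable D μ := indicator_preimage_one_eq_self hD₀₁ ▸
    (integrable_const 1).indicator (hD (measurableSet_singleton 1))
  have hp_sup : μ[D | m ⊔ MeasurableSpace.comap W inferInstance] =ᵐ[μ] p :=
    hp ▸ (hindep.congr hYW .rfl).condExp_sup_comap_eq hm hW hD hD₀₁
  have htreated : ∫ ω, D ω * Y₁ ω / p ω ∂μ = ∫ ω, Y₁ ω ∂μ :=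
    integral_mul_div_eq_integral_of_condExp_eq hle
      ((measurable_fst.comp hW_sup).aestronglyMeasurable.congr (hYW.fun_comp Prod.fst).symm)
      hp_sup_meas hD_int hint₁ hp_sup (by filter_upwards [hp₀₁] with ω h using h.1.ne')
  have hcontrol : ∫ ω, (1 - D ω) * Y₀ ω / (1 - p ω) ∂μ = ∫ ω, Y₀ ω ∂μ :=
    integral_mul_div_eq_integral_of_condExp_eq hle
      ((measurable_snd.comp hW_sup).aestronglyMeasurable.congr (hYW.fun_comp Prod.snd).symm)
      (stronglyMeasurable_const.sub hp_sup_meas) ((integrable_const 1).sub hD_int) hint₀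
      ((condExp_const_sub hle 1 hD_int).trans (hp_sup.fun_comp (1 - ·)))
      (by filter_upwards [hp₀₁] with ω h using (sub_pos.2 h.2).ne')
  rw [integral_sub hint₁ hint₀, integral_sub hY₁ hY₀, htreated, hcontrol]

end ProbabilityTheory

theorem stmt3_general {Ω E : Type*} [MeasurableSpace Ω] [StandardBorelSpace Ω]
    [MeasurableSpace E]
    (μ : Measure Ω) [IsProbabilityMeasure μ]
    (Y₁ Y₀ D : Ω → ℝ) (X : Ω → E)
    (hY₁ : Integrable Y₁ μ) (hY₀ : Integrable Y₀ μ)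
    (hD : ∀ ω, D ω = 0 ∨ D ω = 1)
    (hDmeas : Measurable D)
    (hmX : MeasurableSpace.comap X ‹MeasurableSpace E› ≤ ‹MeasurableSpace Ω›)
    (hindep : CondIndepFun (MeasurableSpace.comap X ‹MeasurableSpace E›) hmX
      (fun ω => (Y₁ ω, Y₀ ω)) D μ)
    (p : Ω → ℝ)
    (hp : p = μ[D | MeasurableSpace.comap X ‹MeasurableSpace E›])
    (hp01 : ∀ᵐ ω ∂μ, 0 < p ω ∧ p ω < 1)
    (hint1 : Integrable (fun ω => D ω * Y₁ ω / p ω) μ)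
    (hint0 : Integrable (fun ω => (1 - D ω) * Y₀ ω / (1 - p ω)) μ) :
    ∫ ω, (D ω * Y₁ ω / p ω - (1 - D ω) * Y₀ ω / (1 - p ω)) ∂μ
      = ∫ ω, (Y₁ ω - Y₀ ω) ∂μ :=
  integral_ipw_eq_integral_sub hmX hY₁ hY₀ hDmeas hD hindep hp hp01 hint1 hint0

theorem stmt3 {Ω E : Type*} [MeasurableSpace Ω] [StandardBorelSpace Ω]
    [MeasurableSpace E]
    (μ : Measure Ω) [IsProbabilityMeasure μ]
    (Y₁ Y₀ D : Ω → ℝ) (X : Ω → E)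
    (hY₁ : Integrable Y₁ μ) (hY₀ : Integrable Y₀ μ)
    (hD : ∀ ω, D ω = 0 ∨ D ω = 1)
    (hDmeas : Measurable D) (hXmeas : Measurable X)
    (hmX : MeasurableSpace.comap X ‹MeasurableSpace E› ≤ ‹MeasurableSpace Ω›)
    (hindep : CondIndepFun (MeasurableSpace.comap X ‹MeasurableSpace E›) hmX
      (fun ω => (Y₁ ω, Y₀ ω)) D μ)
    (p : Ω → ℝ)
    (hp : p = μ[D | MeasurableSpace.comap X ‹MeasurableSpace E›])
    (hp01 : ∀ᵐ ω ∂μ, 0 < p ω ∧ p ω < 1)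
    (hint1 : Integrable (fun ω => D ω * Y₁ ω / p ω) μ)
    (hint0 : Integrable (fun ω => (1 - D ω) * Y₀ ω / (1 - p ω)) μ) :
    ∫ ω, (D ω * Y₁ ω / p ω - (1 - D ω) * Y₀ ω / (1 - p ω)) ∂μ
      = ∫ ω, (Y₁ ω - Y₀ ω) ∂μ :=
  stmt3_general μ Y₁ Y₀ D X hY₁ hY₀ hD hDmeas hmX hindep p hp hp01 hint1 hint0
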